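/- Let n ≥ 2 and let G ⊊ ℝⁿ be a domain. Then the visual angle function v_G : G × G → [0,π] is a pseudometric on G: it is nonnegative, symmetric, vanishes on the diagonal, and satisfies v_G(x,y) ≤ v_G(x,z) + v_G(z,y) for all x,y,z ∈ G. Moreover, if the boundary ∂G is not a proper subset of a line (i.e. it is not the case that ∂G is contained in some affine line without being equal to that whole line), then v_G is a metric: v_G(x,y) = 0 implies x = y. -/
import Mathlib


open EuclideanGeometry Real Set InnerProductGeometry

open scoped RealInnerProductSpace

lemma angle_triangle_unit {V : Type*} [NormedAddCommGroup V] [InnerProductSpace ℝ V]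
    {x y z : V} (hx : ‖x‖ = 1) (hy : ‖y‖ = 1) (hz : ‖z‖ = 1) :
    InnerProductGeometry.angle x z ≤
      InnerProductGeometry.angle x y + InnerProductGeometry.angle y z := by
  rcases le_or_gt π (InnerProductGeometry.angle x y + InnerProductGeometry.angle y z) with h | h
  · exact le_trans (angle_le_pi x z) h
  set a := InnerProductGeometry.angle x y with ha
  set b := InnerProductGeometry.angle y z with hb
  have ha0 : 0 ≤ a := angle_nonneg x y
  have hb0 : 0 ≤ b := angle_nonneg y z
  have hapi : a ≤ π := angle_le_pi x y
  have hbpi : b ≤ π := angle_le_pi y z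
  have hcos_a : Real.cos a = ⟪x, y⟫ := by rw [ha, cos_angle, hx, hy]; simp
  have hcos_b : Real.cos b = ⟪y, z⟫ := by rw [hb, cos_angle, hy, hz]; simp
  have hcos_c : Real.cos (InnerProductGeometry.angle x z) = ⟪x, z⟫ := by
    rw [cos_angle, hx, hz]; simp
  set x' := x - ⟪x, y⟫ • y with hx'
  set z' := z - ⟪z, y⟫ • y with hz'
  have hyy : ⟪y, y⟫ = 1 := by
    rw [real_inner_self_eq_norm_sq, hy]; norm_num
  have hx'2 : ‖x'‖ ^ 2 = 1 - ⟪x, y⟫ ^ 2 := by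
    rw [hx', norm_sub_sq_real, real_inner_smul_right, norm_smul, hx]
    rw [hy]
    simp [Real.norm_eq_abs, mul_pow, sq_abs]
    ring
  have hz'2 : ‖z'‖ ^ 2 = 1 - ⟪z, y⟫ ^ 2 := by
    rw [hz', norm_sub_sq_real, real_inner_smul_right, norm_smul, hz]
    rw [hy]
    simp [Real.norm_eq_abs, mul_pow, sq_abs]
    ring
  have hinner : ⟪x', z'⟫ = ⟪x, z⟫ - ⟪x, y⟫ * ⟪y, z⟫ := by
    simp only [hx', hz', inner_sub_left, inner_sub_right, real_inner_smul_left,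
      real_inner_smul_right, hyy]
    rw [real_inner_comm z y, real_inner_comm y x]
    ring
  have hsa : Real.sin a = ‖x'‖ := by
    have h1 : Real.sin a ^ 2 = ‖x'‖ ^ 2 := by
      rw [Real.sin_sq, hcos_a, hx'2]
    have h2 : 0 ≤ Real.sin a := Real.sin_nonneg_of_nonneg_of_le_pi ha0 hapi
    rw [← Real.sqrt_sq h2, h1, Real.sqrt_sq (norm_nonneg _)]
  have hsb : Real.sin b = ‖z'‖ := by
    have h1 : Real.sin b ^ 2 = ‖z'‖ ^ 2 := by
      rw [Real.sin_sq, hcos_b, hz'2, real_inner_comm]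
    have h2 : 0 ≤ Real.sin b := Real.sin_nonneg_of_nonneg_of_le_pi hb0 hbpi
    rw [← Real.sqrt_sq h2, h1, Real.sqrt_sq (norm_nonneg _)]
  have hcs : ⟪x, y⟫ * ⟪y, z⟫ - ⟪x, z⟫ ≤ Real.sin a * Real.sin b := by
    have h1 := abs_real_inner_le_norm x' z'
    have h2 : -⟪x', z'⟫ ≤ ‖x'‖ * ‖z'‖ := by
      rcases abs_cases (⟪x', z'⟫ : ℝ) with h | h <;> linarith [h.1]
    rw [hinner] at h2
    rw [hsa, hsb]
    linarith
  have hkey : Real.cos (a + b) ≤ Real.cos (InnerProductGeometry.angle x z) := by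
    rw [Real.cos_add, hcos_a, hcos_b, hcos_c]
    linarith
  by_contra hc
  push_neg at hc
  have := Real.strictAntiOn_cos ⟨by linarith, h.le⟩
    ⟨angle_nonneg x z, angle_le_pi x z⟩ hc
  linarith

lemma angle_triangle_gen {V : Type*} [NormedAddCommGroup V] [InnerProductSpace ℝ V]
    (x y z : V) :
    InnerProductGeometry.angle x z ≤
      InnerProductGeometry.angle x y + InnerProductGeometry.angle y z := by
  by_cases hx : x = 0
  · subst hx
    rw [angle_zero_left, angle_zero_left]
    linarith [InnerProductGeometry.angle_nonneg y z]
  by_cases hz : z = 0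
  · subst hz
    rw [angle_zero_right, angle_zero_right]
    linarith [InnerProductGeometry.angle_nonneg x y]
  by_cases hy : y = 0
  · subst hy
    rw [angle_zero_right, angle_zero_left]
    linarith [InnerProductGeometry.angle_le_pi x z]
  have hxp : (0:ℝ) < ‖x‖⁻¹ := inv_pos.2 (norm_pos_iff.2 hx)
  have hyp : (0:ℝ) < ‖y‖⁻¹ := inv_pos.2 (norm_pos_iff.2 hy)
  have hzp : (0:ℝ) < ‖z‖⁻¹ := inv_pos.2 (norm_pos_iff.2 hz)
  have h := angle_triangle_unit (x := ‖x‖⁻¹ • x) (y := ‖y‖⁻¹ • y) (z := ‖z‖⁻¹ • z)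
    (norm_smul_inv_norm hx) (norm_smul_inv_norm hy) (norm_smul_inv_norm hz)
  rwa [angle_smul_left_of_pos _ _ hxp, angle_smul_left_of_pos _ _ hxp,
    angle_smul_left_of_pos _ _ hyp, angle_smul_right_of_pos _ _ hzp,
    angle_smul_right_of_pos _ _ hyp, angle_smul_right_of_pos _ _ hzp] at h

lemma euclid_angle_triangle {n : ℕ} (x z y w : EuclideanSpace ℝ (Fin n)) :
    ∠ x w y ≤ ∠ x w z + ∠ z w y := by
  simp only [EuclideanGeometry.angle, vsub_eq_sub]
  exact angle_triangle_gen (x - w) (z - w) (y - w)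


/-- The visual angle metric on a domain `G ⊊ ℝⁿ`:
`v_G(x,y) = sup_{z ∈ ∂G} ∠(x,z,y)`. -/
noncomputable def visualAngle {n : ℕ} (G : Set (EuclideanSpace ℝ (Fin n)))
    (x y : EuclideanSpace ℝ (Fin n)) : ℝ :=
  sSup ((fun z => ∠ x z y) '' frontier G)

theorem stmt10 (n : ℕ) (hn : 2 ≤ n) (G : Set (EuclideanSpace ℝ (Fin n)))
    (hGopen : IsOpen G) (hGconn : IsConnected G) (hGproper : G ≠ Set.univ) :
    (∀ x ∈ G, ∀ y ∈ G,
      0 ≤ visualAngle G x y ∧ visualAngle G x y ≤ π ∧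
      visualAngle G x y = visualAngle G y x ∧ visualAngle G x x = 0 ∧
      ∀ z ∈ G, visualAngle G x y ≤ visualAngle G x z + visualAngle G z y) ∧
    ((¬ ∃ (p u : EuclideanSpace ℝ (Fin n)), u ≠ 0 ∧
        frontier G ⊂ Set.range (fun t : ℝ => p + t • u)) →
      ∀ x ∈ G, ∀ y ∈ G, visualAngle G x y = 0 → x = y) := by
  -- frontier is nonempty
  have hfr : (frontier G).Nonempty := by
    rw [nonempty_frontier_iff]
    exact ⟨hGconn.nonempty, hGproper⟩
  -- G is disjoint from its frontier
  have hdisj : ∀ w ∈ frontier G, w ∉ G := by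
    intro w hw
    rw [hGopen.frontier_eq] at hw
    exact hw.2
  have hbdd : ∀ x y : EuclideanSpace ℝ (Fin n),
      BddAbove ((fun z => ∠ x z y) '' frontier G) := by
    rintro x y
    exact ⟨π, by rintro _ ⟨w, hw, rfl⟩; exact EuclideanGeometry.angle_le_pi _ _ _⟩
  have hne : ∀ x y : EuclideanSpace ℝ (Fin n),
      ((fun z => ∠ x z y) '' frontier G).Nonempty := fun x y => hfr.image _
  have hnonneg : ∀ x y : EuclideanSpace ℝ (Fin n), 0 ≤ visualAngle G x y := by
    intro x y
    obtain ⟨w, hw⟩ := hfr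
    exact le_trans (EuclideanGeometry.angle_nonneg x w y)
      (le_csSup (hbdd x y) ⟨w, hw, rfl⟩)
  constructor
  · intro x hx y hy
    refine ⟨hnonneg x y, ?_, ?_, ?_, ?_⟩
    · exact Real.sSup_le (by rintro _ ⟨w, hw, rfl⟩; exact EuclideanGeometry.angle_le_pi _ _ _)
        Real.pi_nonneg
    · unfold visualAngle
      congr 1
      ext t
      constructor
      · rintro ⟨w, hw, rfl⟩; exact ⟨w, hw, (EuclideanGeometry.angle_comm x w y).symm⟩
      · rintro ⟨w, hw, rfl⟩; exact ⟨w, hw, (EuclideanGeometry.angle_comm y w x).symm⟩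
    · refine le_antisymm (Real.sSup_le ?_ le_rfl) (hnonneg x x)
      rintro _ ⟨w, hw, rfl⟩
      show ∠ x w x ≤ 0
      rw [EuclideanGeometry.angle_self_of_ne]
      intro h
      exact hdisj w hw (h ▸ hx)
    · intro z hz
      refine Real.sSup_le ?_ (add_nonneg (hnonneg x z) (hnonneg z y))
      rintro _ ⟨w, hw, rfl⟩
      calc ∠ x w y ≤ ∠ x w z + ∠ z w y := euclid_angle_triangle x z y w
        _ ≤ visualAngle G x z + visualAngle G z y :=
          add_le_add (le_csSup (hbdd x z) ⟨w, hw, rfl⟩) (le_csSup (hbdd z y) ⟨w, hw, rfl⟩)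
  · intro hline x hx y hy h0
    by_contra hxy
    apply hline
    refine ⟨x, y - x, sub_ne_zero.mpr (Ne.symm hxy), ?_, ?_⟩
    · -- frontier G ⊆ line through x and y
      intro w hw
      have hang : ∠ x w y = 0 := by
        refine le_antisymm ?_ (EuclideanGeometry.angle_nonneg x w y)
        rw [← h0]
        exact le_csSup (hbdd x y) ⟨w, hw, rfl⟩
      rw [show (∠ x w y) = InnerProductGeometry.angle (x - w) (y - w) by
        simp [EuclideanGeometry.angle, vsub_eq_sub]] at hang
      rw [InnerProductGeometry.angle_eq_zero_iff] at hang
      obtain ⟨hxw, r, hr0, hr⟩ := hang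
      have hr1 : r ≠ 1 := by
        intro h
        rw [h, one_smul] at hr
        exact hxy (sub_left_inj.mp hr).symm
      have hyx : y - x = (1 - r) • (w - x) := by
        have h1 : y - x = (y - w) - (x - w) := by abel
        rw [h1, hr]
        rw [sub_smul, one_smul, smul_sub, smul_sub]
        abel
      refine ⟨(1 - r)⁻¹, ?_⟩
      simp only
      rw [hyx, inv_smul_smul₀ (sub_ne_zero.mpr (Ne.symm hr1))]
      abel
    · intro hsup
      have hmem : x ∈ Set.range (fun t : ℝ => x + t • (y - x)) := ⟨0, by simp⟩
      exact hdisj x (hsup hmem) hx
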